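/- arXiv:2401.03112 — 7 statements merged into one kernel-verified Lean document; each statement's English description precedes it below -/
import Mathlib

section
/- Let D be a division ring, and let {a_1,…,a_s} and {b_1,…,b_s} be two subsets of D, each linearly independent over the center Z(D). Then the element Σ_{i=1}^s a_i·X·b_i of D{X} is nonzero. -/
/-!
Evaluating `X` at every `x ∈ D` turns `∑ aᵢ X bᵢ = 0` into the identity `∑ aᵢ x bᵢ = 0` for all
`x`. In a shortest such identity normalize one coefficient to `b_j = 1`; then
`∑ aᵢ x (y bᵢ - bᵢ y) = 0` is shorter still, so it is trivial and every `bᵢ` is central.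
Now `x = 1` gives `∑ bᵢ aᵢ = 0` with central coefficients and `b_j = 1`, contradicting the
independence of the `aᵢ`.
-/

noncomputable section

/-- The defining relations for the free product `D ∗_{Z(D)} Z(D)⟨X_i : i ∈ s⟩`:
we quotient the free algebra over the center on the type `D ⊕ s` so that the
inclusion of `D` becomes a morphism of `Z(D)`-algebras. -/
inductive GenPolyRel (D : Type*) [DivisionRing D] (s : Type*) :
    FreeAlgebra (Subring.center D) (D ⊕ s) → FreeAlgebra (Subring.center D) (D ⊕ s) → Prop
  | add (a b : D) : GenPolyRel D s (FreeAlgebra.ι _ (Sum.inl (a + b)))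
      (FreeAlgebra.ι _ (Sum.inl a) + FreeAlgebra.ι _ (Sum.inl b))
  | mul (a b : D) : GenPolyRel D s (FreeAlgebra.ι _ (Sum.inl (a * b)))
      (FreeAlgebra.ι _ (Sum.inl a) * FreeAlgebra.ι _ (Sum.inl b))
  | one : GenPolyRel D s (FreeAlgebra.ι _ (Sum.inl 1)) 1
  | central (c : Subring.center D) (a : D) :
      GenPolyRel D s (FreeAlgebra.ι _ (Sum.inl (c • a))) (c • FreeAlgebra.ι _ (Sum.inl a))

/-- The ring of generalized polynomials `D{X_i : i ∈ s}` with coefficients in `D`,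
i.e. the coproduct (free product) of the `Z(D)`-algebras `D` and the free
algebra on `s` over `Z(D)`. For `s = Unit` this is `D{X}`, the free product of
`D` and the polynomial algebra `Z(D)[X]`. -/
def GenPoly (D : Type*) [DivisionRing D] (s : Type*) : Type _ :=
  RingQuot (GenPolyRel D s)

instance (D : Type*) [DivisionRing D] (s : Type*) : Ring (GenPoly D s) :=
  inferInstanceAs (Ring (RingQuot (GenPolyRel D s)))

instance (D : Type*) [DivisionRing D] (s : Type*) :
    Algebra (Subring.center D) (GenPoly D s) :=
  inferInstanceAs (Algebra (Subring.center D) (RingQuot (GenPolyRel D s)))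

/-- The canonical image of a coefficient `a : D` in `D{X_i}`. -/
def GenPoly.C {D : Type*} [DivisionRing D] {s : Type*} (a : D) : GenPoly D s :=
  RingQuot.mkAlgHom (Subring.center D) (GenPolyRel D s) (FreeAlgebra.ι _ (Sum.inl a))

/-- The variable `X_i` in `D{X_i}`. -/
def GenPoly.X {D : Type*} [DivisionRing D] {s : Type*} (i : s) : GenPoly D s :=
  RingQuot.mkAlgHom (Subring.center D) (GenPolyRel D s) (FreeAlgebra.ι _ (Sum.inr i))

/-- Evaluation of a generalized polynomial at the point `x : s → D`, i.e. the
`Z(D)`-algebra map `D{X_i} → D` restricting to the identity on `D` and sending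
`X_i ↦ x i`. -/
def GenPoly.eval {D : Type*} [DivisionRing D] {s : Type*} (x : s → D) :
    GenPoly D s →ₐ[Subring.center D] D :=
  RingQuot.liftAlgHom (Subring.center D)
    ⟨FreeAlgebra.lift (Subring.center D) (Sum.elim id x), by
      intro u v h
      induction h with
      | add a b => simp
      | mul a b => simp
      | one => simp
      | central c a => simp⟩

namespace GenPoly

variable {D : Type*} [DivisionRing D] {s : Type*}

@[simp]
lemma eval_C (x : s → D) (a : D) : eval x (C a) = a :=
  (RingQuot.liftAlgHom_mkAlgHom_apply _ _ _ _).trans (by simp)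

@[simp]
lemma eval_X (x : s → D) (i : s) : eval x (X i) = x i :=
  (RingQuot.liftAlgHom_mkAlgHom_apply _ _ _ _).trans (by simp)

end GenPoly

section

variable {R ι : Type*} [Ring R]

lemma Finset.sum_mul_mul_commutator_eq_zero {s : Finset ι} {a c : ι → R}
    (h : ∀ x, ∑ i ∈ s, a i * x * c i = 0) (x y : R) :
    ∑ i ∈ s, a i * x * (y * c i - c i * y) = 0 := by
  calc ∑ i ∈ s, a i * x * (y * c i - c i * y)
      = ∑ i ∈ s, a i * (x * y) * c i - (∑ i ∈ s, a i * x * c i) * y := by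
        rw [Finset.sum_mul, ← Finset.sum_sub_distrib]
        exact Finset.sum_congr rfl fun i _ => by noncomm_ring
    _ = 0 := by rw [h, h, zero_mul, sub_zero]

lemma LinearIndependent.eq_zero_of_sum_mul_eq_zero_of_mem_center {a d : ι → R}
    (ha : LinearIndependent (Subring.center R) a) {s : Finset ι}
    (hd : ∀ i ∈ s, d i ∈ Subring.center R) (h : ∑ i ∈ s, a i * d i = 0) :
    ∀ i ∈ s, d i = 0 := by
  classical
  let g : ι → Subring.center R := fun i => if hi : d i ∈ Subring.center R then ⟨d i, hi⟩ else 0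
  have hg : ∀ i ∈ s, (g i : R) = d i := fun i hi => by simp [g, hd i hi]
  have hsum : ∑ i ∈ s, g i • a i = 0 := by
    rw [← h]
    refine Finset.sum_congr rfl fun i hi => ?_
    rw [Subring.smul_def, smul_eq_mul, hg i hi, Subring.mem_center_iff.mp (hd i hi)]
  intro i hi
  rw [← hg i hi, linearIndependent_iff'.mp ha s g hsum i hi, ZeroMemClass.coe_zero]

end

theorem LinearIndependent.eq_zero_of_forall_sum_mul_mul_eq_zero {D ι : Type*} [DivisionRing D]
    {a : ι → D} (ha : LinearIndependent (Subring.center D) a) (s : Finset ι) {c : ι → D}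
    (h : ∀ x, ∑ i ∈ s, a i * x * c i = 0) : ∀ i ∈ s, c i = 0 := by
  classical
  induction s using Finset.induction_on generalizing c with
  | empty => simp
  | insert j s hj ih =>
    have hcj : c j = 0 := by
      by_contra hcj
      set d : ι → D := fun i => c i * (c j)⁻¹
      have hd : ∀ x, ∑ i ∈ insert j s, a i * x * d i = 0 := fun x => by
        simp only [d, ← mul_assoc, ← Finset.sum_mul, h, zero_mul]
      have hdj : d j = 1 := mul_inv_cancel₀ hcj
      have hcentral : ∀ i ∈ insert j s, d i ∈ Subring.center D := by
        intro i hi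
        rcases Finset.mem_insert.mp hi with rfl | hi
        · rw [hdj]; exact Subring.one_mem _
        refine Subring.mem_center_iff.mpr fun y => sub_eq_zero.mp ?_
        refine ih (c := fun i => y * d i - d i * y) (fun x => ?_) i hi
        simpa [Finset.sum_insert hj, hdj] using Finset.sum_mul_mul_commutator_eq_zero hd x y
      have := ha.eq_zero_of_sum_mul_eq_zero_of_mem_center hcentral (by simpa using hd 1) j
        (Finset.mem_insert_self j s)
      exact one_ne_zero (hdj ▸ this)
    rw [Finset.forall_mem_insert]
    exact ⟨hcj, ih fun x => by simpa [Finset.sum_insert hj, hcj] using h x⟩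

/-- If `{a_1,…,a_s}` and `{b_1,…,b_s}` (`s ≥ 1`) are subsets of `D`, each linearly
independent over the center `Z(D)`, then `Σ_i a_i X b_i ≠ 0` in `D{X}`. -/
theorem lem13 (D : Type*) [DivisionRing D] (s : ℕ) (hs : 0 < s) (a b : Fin s → D)
    (ha : LinearIndependent (Subring.center D) a)
    (hb : LinearIndependent (Subring.center D) b) :
    ∑ i : Fin s, GenPoly.C (a i) * GenPoly.X (() : Unit) * GenPoly.C (b i) ≠ 0 := by
  intro h
  have hb₀ : b ⟨0, hs⟩ ≠ 0 := hb.ne_zero _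
  refine hb₀ (ha.eq_zero_of_forall_sum_mul_mul_eq_zero Finset.univ (fun x => ?_) _
    (Finset.mem_univ _))
  simpa using congrArg (GenPoly.eval fun _ : Unit => x) h

end
end

section
/- Let F be a field, R a unital F-algebra, and n ≠ 2 an integer. Suppose f, g : R → R are additive maps satisfying f(x) = xⁿ·g(x⁻¹) for all units x ∈ R^× (where xⁿ is computed in the group of units when n is negative). If it is not the case that F has characteristic p > 0 with (p−1) dividing (n−2), then f(u) = 0 and g(u) = 0 for every unit u ∈ R^×. -/
/-!
Pick a nonzero `c` in the prime field of `F` with `c ^ (n - 2) ≠ 1`: in characteristic `0` take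
`c = 2`; in characteristic `p` take a generator of `(ZMod p)ˣ`, whose order `p - 1` does not
divide `n - 2`. Additive maps commute with multiplication by such `c`, and since `c` is central,
evaluating `f(x) = xⁿ g(x⁻¹)` at `x = c u` gives `c² f(u) = cⁿ f(u)`, so `f(u) = 0`.
Then `g(u) = 0` follows from the relation at `u⁻¹`.
-/

section

variable {F R : Type*} [Field F] [Ring R] [Algebra F R] {n : ℤ} {f g : R → R}

theorem sq_smul_eq_zpow_smul
    (hfg : ∀ x : Rˣ, f (x : R) = ((x ^ n : Rˣ) : R) * g ((x⁻¹ : Rˣ) : R))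
    {c : F} (hc : c ≠ 0) (hfc : ∀ x, f (c • x) = c • f x) (hgc : ∀ x, g (c • x) = c • g x)
    (u : Rˣ) : c ^ 2 • f u = c ^ n • f u := by
  set s : Rˣ := Units.map (algebraMap F R : F →* R) (Units.mk0 c hc)
  have hs : ∀ (k : ℤ) (x : R), ((s ^ k : Rˣ) : R) * x = c ^ k • x := fun k x => by
    rw [← map_zpow, Units.coe_map, Units.val_zpow_eq_zpow_val, Units.val_mk0,
      Algebra.smul_def]
    rfl
  have hcomm : Commute s u := Units.ext (Algebra.commutes c (u : R))
  have hval : ((s * u : Rˣ) : R) = c • (u : R) := by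
    rw [Units.val_mul, ← zpow_one s, hs, zpow_one]
  have hpow : (((s * u) ^ n : Rˣ) : R) = c ^ n • ((u ^ n : Rˣ) : R) := by
    rw [hcomm.mul_zpow, Units.val_mul, hs]
  have hinv : (((s * u)⁻¹ : Rˣ) : R) = c⁻¹ • ((u⁻¹ : Rˣ) : R) := by
    rw [mul_inv_rev, ← hcomm.inv_inv.eq, Units.val_mul, ← zpow_neg_one, hs, zpow_neg_one]
  have hscaled : c • f u = c ^ n • (((u ^ n : Rˣ) : R) * g (c⁻¹ • ((u⁻¹ : Rˣ) : R))) := by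
    rw [← hfc, ← hval, hfg, hpow, hinv, smul_mul_assoc]
  calc c ^ 2 • f u = c • (c ^ n • (((u ^ n : Rˣ) : R) * g (c⁻¹ • ((u⁻¹ : Rˣ) : R)))) := by
        rw [pow_two, mul_smul, hscaled]
    _ = c ^ n • f u := by
        rw [smul_comm c, ← mul_smul_comm, ← hgc, smul_inv_smul₀ hc, hfg u]

theorem apply_eq_zero_of_zpow_sub_two_ne_one
    (hfg : ∀ x : Rˣ, f (x : R) = ((x ^ n : Rˣ) : R) * g ((x⁻¹ : Rˣ) : R))
    {c : F} (hc : c ≠ 0) (hcn : c ^ (n - 2) ≠ 1) (hfc : ∀ x, f (c • x) = c • f x)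
    (hgc : ∀ x, g (c • x) = c • g x) (u : Rˣ) : f u = 0 := by
  have hne : c ^ (2 : ℤ) - c ^ n ≠ 0 := fun h => hcn <| by
    rw [zpow_sub₀ hc, ← sub_eq_zero.mp h, div_self (zpow_ne_zero _ hc)]
  have h := sq_smul_eq_zpow_smul hfg hc hfc hgc u
  rw [← zpow_natCast, ← sub_eq_zero, ← sub_smul] at h
  exact (smul_eq_zero.mp h).resolve_left hne

end

theorem exists_natCast_zpow_ne_one_of_charZero (F : Type*) [Field F] [CharZero F] {k : ℤ}
    (hk : k ≠ 0) : ∃ m : ℕ, (m : F) ≠ 0 ∧ (m : F) ^ k ≠ 1 := by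
  refine ⟨2, two_ne_zero, fun h => hk ?_⟩
  have h2 : (((2 : ℚ) ^ k : ℚ) : F) = ((1 : ℚ) : F) := by push_cast; exact h
  exact (zpow_eq_one_iff_right₀ zero_le_two (by norm_num)).mp (Rat.cast_injective h2)

theorem exists_natCast_zpow_ne_one_of_charP (F : Type*) [Field F] (p : ℕ) [Fact p.Prime]
    [CharP F p] {k : ℤ} (hk : ¬ ((p : ℤ) - 1) ∣ k) :
    ∃ m : ℕ, (m : F) ≠ 0 ∧ (m : F) ^ k ≠ 1 := by
  obtain ⟨a, ha⟩ := IsCyclic.exists_ofOrder_eq_natCard (α := (ZMod p)ˣ)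
  rw [Nat.card_eq_fintype_card, ZMod.card_units] at ha
  have hak : a ^ k ≠ 1 := fun h => hk <| by
    have := orderOf_dvd_iff_zpow_eq_one.mpr h
    rwa [ha, Nat.cast_sub (Fact.out : p.Prime).one_le, Nat.cast_one] at this
  set φ := ZMod.castHom (dvd_refl p) F
  have hm : (((a : ZMod p).val : ℕ) : F) = φ a := ZMod.natCast_val _
  refine ⟨(a : ZMod p).val, hm ▸ (map_ne_zero φ).mpr a.ne_zero, fun h => hak ?_⟩
  rw [hm, ← map_zpow₀, ← map_one φ] at h
  exact Units.val_eq_one.mp ((Units.val_zpow_eq_zpow_val a k).trans (φ.injective h))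

theorem exists_natCast_zpow_ne_one (F : Type*) [Field F] {k : ℤ} (hk : k ≠ 0)
    (hchar : ¬ ∃ p : ℕ, 0 < p ∧ CharP F p ∧ ((p : ℤ) - 1) ∣ k) :
    ∃ m : ℕ, (m : F) ≠ 0 ∧ (m : F) ^ k ≠ 1 := by
  obtain ⟨p, hp⟩ := CharP.exists F
  rcases CharP.char_is_prime_or_zero F p with hprime | rfl
  · have : Fact p.Prime := ⟨hprime⟩
    exact exists_natCast_zpow_ne_one_of_charP F p fun h => hchar ⟨p, hprime.pos, hp, h⟩
  · have : CharZero F := CharP.charP_to_charZero F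
    exact exists_natCast_zpow_ne_one_of_charZero F hk

/-- Let `R` be a unital algebra over a field `F` and `n ≠ 2` an integer. If the additive
maps `f, g : R → R` satisfy `f(x) = xⁿ g(x⁻¹)` for all units `x` (powers computed in the
group of units), and it is not the case that `char F = p > 0` with `p − 1 ∣ n − 2`, then
`f` and `g` vanish on all units of `R`. -/
theorem thm2 (F : Type*) [Field F] (R : Type*) [Ring R] [Algebra F R]
    (n : ℤ) (hn : n ≠ 2) (f g : R → R)
    (hf : ∀ x y : R, f (x + y) = f x + f y)
    (hg : ∀ x y : R, g (x + y) = g x + g y)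
    (hfg : ∀ x : Rˣ, f (x : R) = ((x ^ n : Rˣ) : R) * g ((x⁻¹ : Rˣ) : R))
    (hchar : ¬ ∃ p : ℕ, 0 < p ∧ CharP F p ∧ ((p : ℤ) - 1) ∣ (n - 2)) :
    ∀ u : Rˣ, f (u : R) = 0 ∧ g (u : R) = 0 := by
  obtain ⟨m, hm0, hmn⟩ := exists_natCast_zpow_ne_one F (sub_ne_zero.mpr hn) hchar
  have hf_units : ∀ u : Rˣ, f u = 0 :=
    apply_eq_zero_of_zpow_sub_two_ne_one hfg hm0 hmn
      (map_natCast_smul (AddMonoidHom.mk' f hf) F F m)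
      (map_natCast_smul (AddMonoidHom.mk' g hg) F F m)
  intro u
  have h := hfg u⁻¹
  rw [inv_inv, hf_units] at h
  exact ⟨hf_units u, (Units.mul_right_eq_zero _).mp h.symm⟩
end

section
/- Let k > 1 be an integer and p > 2 a prime number. Suppose gcd(p,k) = 1 and k−1 is not a non-negative power of p (i.e., there is no integer j ≥ 0 with k−1 = p^j). Let m ≥ 0 be the largest integer such that p^m divides k−1. Then p does not divide the binomial coefficient C(k, p^m + 1). -/
/-!
Write `k - 1 = p ^ m * s` with `p ∤ s`. By Lucas's theorem `C(p ^ m * s, p ^ m) ≡ C(s, 1) = s`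
modulo `p`, so `p ∤ C(k - 1, p ^ m)`. Since `p ∤ k`, the identity
`k * C(k - 1, p ^ m) = C(k, p ^ m + 1) * (p ^ m + 1)` transfers this to `C(k, p ^ m + 1)`.
-/

theorem Nat.Prime.dvd_choose_of_dvd_succ_choose_succ {p n r : ℕ} (hp : p.Prime)
    (hn : ¬ p ∣ n + 1) (h : p ∣ (n + 1).choose (r + 1)) : p ∣ n.choose r := by
  have hprod : p ∣ (n + 1) * n.choose r := by
    rw [Nat.add_one_mul_choose_eq]
    exact h.mul_right _
  exact (hp.dvd_mul.mp hprod).resolve_left hn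

theorem Nat.Prime.not_dvd_choose_pow_mul_pow {p s : ℕ} (hp : p.Prime) (hs : ¬ p ∣ s)
    (m : ℕ) : ¬ p ∣ (p ^ m * s).choose (p ^ m) := by
  have := Fact.mk hp
  have hlucas : (p ^ m * s).choose (p ^ m) ≡ s [MOD p] := by
    simpa using Choose.choose_pow_mul_pow_mul_modEq_choose_nat (p := p) (k := m) (a := s) (b := 1)
  rwa [hlucas.dvd_iff dvd_rfl]

theorem lem3i_general (k p m : ℕ) (hp : p.Prime)
    (hcop : Nat.gcd p k = 1)
    (hm : p ^ m ∣ k - 1) (hmax : ¬ p ^ (m + 1) ∣ k - 1) :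
    ¬ p ∣ Nat.choose k (p ^ m + 1) := by
  have hpk : ¬ p ∣ k := hp.coprime_iff_not_dvd.mp hcop
  obtain ⟨n, rfl⟩ : ∃ n, k = n + 1 :=
    Nat.exists_eq_add_one.mpr (Nat.pos_of_ne_zero fun hk => hpk (hk ▸ dvd_zero p))
  rw [Nat.add_sub_cancel] at hm hmax
  obtain ⟨s, rfl⟩ := hm
  have hps : ¬ p ∣ s := fun ⟨c, hc⟩ => hmax ⟨c, by rw [hc, pow_succ, mul_assoc]⟩
  exact fun h => hp.not_dvd_choose_pow_mul_pow hps m (hp.dvd_choose_of_dvd_succ_choose_succ hpk h)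

/-- Let `k > 1` be an integer and `p > 2` a prime with `gcd(p,k) = 1` such that `k − 1`
is not a non-negative power of `p`. If `m ≥ 0` is the largest integer with `p^m ∣ k − 1`,
then `p ∤ C(k, p^m + 1)`. -/
theorem lem3i (k p m : ℕ) (hk : 1 < k) (hp : p.Prime) (hp2 : 2 < p)
    (hcop : Nat.gcd p k = 1)
    (hnotpow : ¬ ∃ j : ℕ, k - 1 = p ^ j)
    (hm : p ^ m ∣ k - 1) (hmax : ¬ p ^ (m + 1) ∣ k - 1) :
    ¬ p ∣ Nat.choose k (p ^ m + 1) :=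
  lem3i_general k p m hp hcop hm hmax
end

section
/- Let D be a noncommutative division ring with char D = p > 2, and let n > 2 be an integer with (p−1) dividing (n−2). Suppose f : D → D is an additive map satisfying f(x) = −xⁿ·f(x⁻¹) for all nonzero x ∈ D. Then f(x²) = ((1+x)ⁿ − xⁿ − 1)·f(x) for all x ∈ D. -/
/-! Write `y = x + x² = x (1 + x)`. Since `x` and `1 + x` commute, `y⁻¹ = x⁻¹ - (1 + x)⁻¹` and
`yⁿ = xⁿ (1 + x)ⁿ`. Applying the functional equation to `y`, and then to `x` and `1 + x` (in the
inverted form `f a⁻¹ = -(aⁿ)⁻¹ f a`), gives `f x + f (x²) = ((1 + x)ⁿ - xⁿ) f x`, because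
`f (1 + x) = f x`: at `x = 1` the equation reads `f 1 = -f 1`, so `f 1 = 0` when `2 ≠ 0`. -/

theorem inv_add_sq_eq_inv_sub_inv {D : Type*} [DivisionRing D] {x : D} (hx : x ≠ 0)
    (hx1 : 1 + x ≠ 0) : (x + x ^ 2)⁻¹ = x⁻¹ - (1 + x)⁻¹ := by
  rw [inv_sub_inv' hx hx1, add_sub_cancel_right, mul_one, ← mul_inv_rev, add_mul, one_mul, sq]

section

variable {D : Type*} [DivisionRing D] (f : D →+ D) {n : ℕ}
  (hff : ∀ x : D, x ≠ 0 → f x = -(x ^ n * f x⁻¹))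
include hff

theorem map_one_eq_zero_of_map_eq_neg_pow_mul_map_inv (h2 : (2 : D) ≠ 0) : f 1 = 0 := by
  have h := hff 1 one_ne_zero
  rw [one_pow, inv_one, one_mul, eq_neg_iff_add_eq_zero, ← two_mul] at h
  exact (mul_eq_zero.mp h).resolve_left h2

theorem map_inv_eq_neg_inv_pow_mul_map {a : D} (ha : a ≠ 0) :
    f a⁻¹ = -((a ^ n)⁻¹ * f a) := by
  rw [hff a ha, mul_neg, neg_neg, ← mul_assoc, inv_mul_cancel₀ (pow_ne_zero n ha), one_mul]

theorem map_sq_of_map_eq_neg_pow_mul_map_inv_of_ne_zero (h2 : (2 : D) ≠ 0) {x : D} (hx : x ≠ 0)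
    (hx1 : 1 + x ≠ 0) : f (x ^ 2) = ((1 + x) ^ n - x ^ n - 1) * f x := by
  have hc : Commute x (1 + x) := (Commute.one_right x).add_right (Commute.refl x)
  have hy : x + x ^ 2 = x * (1 + x) := by rw [mul_add, mul_one, sq]
  have hyn : (x + x ^ 2) ^ n = x ^ n * (1 + x) ^ n := by rw [hy, hc.mul_pow]
  have hf1 : f (1 + x) = f x := by
    rw [map_add, map_one_eq_zero_of_map_eq_neg_pow_mul_map_inv f hff h2, zero_add]
  have key := hff (x + x ^ 2) (hy ▸ mul_ne_zero hx hx1)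
  rw [inv_add_sq_eq_inv_sub_inv hx hx1, map_sub, map_inv_eq_neg_inv_pow_mul_map f hff hx,
    map_inv_eq_neg_inv_pow_mul_map f hff hx1, hf1, hyn, map_add] at key
  have e1 : x ^ n * (1 + x) ^ n * ((x ^ n)⁻¹ * f x) = (1 + x) ^ n * f x := by
    rw [(hc.pow_pow n n).eq, mul_assoc, ← mul_assoc (x ^ n), mul_inv_cancel₀ (pow_ne_zero n hx),
      one_mul]
  have e2 : x ^ n * (1 + x) ^ n * (((1 + x) ^ n)⁻¹ * f x) = x ^ n * f x := by
    rw [mul_assoc, ← mul_assoc ((1 + x) ^ n), mul_inv_cancel₀ (pow_ne_zero n hx1), one_mul]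
  rw [mul_sub, mul_neg, mul_neg, e1, e2] at key
  rw [sub_mul, sub_mul, one_mul, eq_sub_iff_add_eq, add_comm, key]
  abel

theorem map_sq_of_map_eq_neg_pow_mul_map_inv (h2 : (2 : D) ≠ 0) (x : D) :
    f (x ^ 2) = ((1 + x) ^ n - x ^ n - 1) * f x := by
  rcases eq_or_ne x 0 with rfl | hx
  · rw [zero_pow two_ne_zero, map_zero, mul_zero]
  rcases eq_or_ne (1 + x) 0 with hx1 | hx1
  · rw [eq_neg_of_add_eq_zero_right hx1, neg_one_sq, map_neg,
      map_one_eq_zero_of_map_eq_neg_pow_mul_map_inv f hff h2, neg_zero, mul_zero]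
  exact map_sq_of_map_eq_neg_pow_mul_map_inv_of_ne_zero f hff h2 hx hx1

end

theorem lem4i_general (D : Type*) [DivisionRing D]
    (p : ℕ) (hp2 : 2 < p) [CharP D p]
    (n : ℕ)
    (f : D → D)
    (hf : ∀ x y : D, f (x + y) = f x + f y)
    (hff : ∀ x : D, x ≠ 0 → f x = -(x ^ n * f x⁻¹)) :
    ∀ x : D, f (x ^ 2) = ((1 + x) ^ n - x ^ n - 1) * f x := by
  have h2 : (2 : D) ≠ 0 := Ring.two_ne_zero (by rw [ringChar.eq D p]; omega)
  exact map_sq_of_map_eq_neg_pow_mul_map_inv (AddMonoidHom.mk' f hf) hff h2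

/-- Let `D` be a noncommutative division ring with `char D = p > 2` and `n > 2` with
`p − 1 ∣ n − 2`. If the additive map `f : D → D` satisfies `f(x) = −xⁿ f(x⁻¹)` for all
`x ∈ D^×`, then `f(x²) = ((1+x)ⁿ − xⁿ − 1)·f(x)` for all `x ∈ D`. -/
theorem lem4i (D : Type*) [DivisionRing D]
    (hnc : ∃ a b : D, a * b ≠ b * a)
    (p : ℕ) (hp : p.Prime) (hp2 : 2 < p) [CharP D p]
    (n : ℕ) (hn : 2 < n) (hdvd : (p - 1) ∣ (n - 2))
    (f : D → D)
    (hf : ∀ x y : D, f (x + y) = f x + f y)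
    (hff : ∀ x : D, x ≠ 0 → f x = -(x ^ n * f x⁻¹)) :
    ∀ x : D, f (x ^ 2) = ((1 + x) ^ n - x ^ n - 1) * f x :=
  lem4i_general D p hp2 n f hf hff
end

section
/- Let D be a noncommutative division ring with char D = p > 2, and let n > 2 be an integer with (p−1) dividing (n−2). Suppose f : D → D is an additive map satisfying f(x) = −xⁿ·f(x⁻¹) for all nonzero x ∈ D. Then for all a, b ∈ D with ab = ba, one has ((1+ab)ⁿ + (1−ab)ⁿ − 2·(ab)ⁿ − 2)·f(a) = 0. -/
/-!
For commuting `a, b` the elements `x = a + b⁻¹` and `y = a + aba` are linked by Hua's identity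
`x⁻¹ = a⁻¹ - y⁻¹`, while `(ab) x = y` and `y a⁻¹ = 1 + ab`. Applying `f(x) = -xⁿ f(x⁻¹)` to `x`,
`a⁻¹` and `y⁻¹` and multiplying by `(ab)ⁿ` gives `(ab)ⁿ f(a + b⁻¹) = (1 + ab)ⁿ f(a) - f(a + aba)`.
Subtracting the same identity for `-a` in place of `a` leaves
`2 (ab)ⁿ f(a) = ((1 + ab)ⁿ + (1 - ab)ⁿ - 2) f(a)`, provided `(-1)ⁿ = 1`. The arithmetic hypotheses
give `xⁿ = x²` on the prime field, hence `(-1)ⁿ = 1` and `2ⁿ = 4`, which also settle the cases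
`ab ∈ {0, 1, -1}` excluded above.
-/

theorem ZMod.pow_eq_sq_of_sub_one_dvd {p n : ℕ} [Fact p.Prime] (hn : 2 ≤ n)
    (hdvd : p - 1 ∣ n - 2) (x : ZMod p) : x ^ n = x ^ 2 := by
  rcases eq_or_ne x 0 with rfl | hx
  · simp [zero_pow (by omega : n ≠ 0)]
  obtain ⟨k, hk⟩ := hdvd
  rw [← Nat.sub_add_cancel hn, pow_add, hk, pow_mul, ZMod.pow_card_sub_one_eq_one hx, one_pow,
    one_mul]

theorem intCast_pow_eq_sq_of_sub_one_dvd {R : Type*} [Ring R] {p n : ℕ} [Fact p.Prime]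
    [CharP R p] (hn : 2 ≤ n) (hdvd : p - 1 ∣ n - 2) (m : ℤ) : (m : R) ^ n = (m : R) ^ 2 := by
  simpa using congrArg (ZMod.castHom dvd_rfl R) (ZMod.pow_eq_sq_of_sub_one_dvd hn hdvd (m : ZMod p))

theorem inv_sub_inv_add_inv {D : Type*} [DivisionRing D] {a b : D} (ha : a ≠ 0) (hb : b ≠ 0)
    (hab : a + b⁻¹ ≠ 0) : a⁻¹ - (a + b⁻¹)⁻¹ = (a + a * b * a)⁻¹ := by
  rw [inv_sub_inv' ha hab, add_sub_cancel_left, ← mul_inv_rev, ← mul_inv_rev]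
  congr 1
  rw [add_mul, ← mul_assoc b⁻¹, inv_mul_cancel₀ hb, one_mul, add_comm, mul_assoc]

section FunctionalEquation

variable {D : Type*} [DivisionRing D] {n : ℕ} {F : D →+ D} {a b : D}

theorem map_inv_eq_neg_inv_pow_mul (hF : ∀ x : D, x ≠ 0 → F x = -(x ^ n * F x⁻¹)) (ha : a ≠ 0) :
    F a⁻¹ = -(a⁻¹ ^ n * F a) := by
  simpa using hF a⁻¹ (inv_ne_zero ha)

theorem pow_mul_map_add_inv (hF : ∀ x : D, x ≠ 0 → F x = -(x ^ n * F x⁻¹)) (hab : Commute a b)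
    (ha : a ≠ 0) (hb : b ≠ 0) (hs : 1 + a * b ≠ 0) :
    (a * b) ^ n * F (a + b⁻¹) = (1 + a * b) ^ n * F a - F (a + a * b * a) := by
  set x := a + b⁻¹ with hx_def
  set y := a + a * b * a
  have hx : x = (1 + a * b) * b⁻¹ := by
    rw [add_mul, one_mul, mul_assoc, mul_inv_cancel₀ hb, mul_one, add_comm]
  have hy : y = (1 + a * b) * a := by rw [add_mul, one_mul]
  have hx0 : x ≠ 0 := hx ▸ mul_ne_zero hs (inv_ne_zero hb)
  have hy0 : y ≠ 0 := hy ▸ mul_ne_zero hs ha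
  have hx_inv : x⁻¹ = a⁻¹ - y⁻¹ := by rw [← inv_sub_inv_add_inv ha hb hx0, sub_sub_cancel]
  have hxy : a * b * x = y := by
    rw [hx_def, mul_add, mul_assoc a b b⁻¹, mul_inv_cancel₀ hb, mul_one, add_comm]
  have hya : y * a⁻¹ = 1 + a * b := by rw [hy, mul_assoc, mul_inv_cancel₀ ha, mul_one]
  have hx_comm : Commute (a * b) x :=
    ((Commute.refl a).mul_left hab.symm).add_right
      ((hab.inv_right₀).mul_left (Commute.refl b).inv_right₀)
  have hy_comm : Commute y a⁻¹ := by
    refine Commute.inv_right₀ (Commute.symm ?_)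
    exact (Commute.refl a).add_right (((Commute.refl a).mul_right hab).mul_right (Commute.refl a))
  calc (a * b) ^ n * F x = -((a * b) ^ n * x ^ n * F x⁻¹) := by rw [hF x hx0]; noncomm_ring
    _ = y ^ n * a⁻¹ ^ n * F a - y ^ n * y⁻¹ ^ n * F y := by
      rw [← hx_comm.mul_pow, hxy, hx_inv, map_sub, map_inv_eq_neg_inv_pow_mul hF ha,
        map_inv_eq_neg_inv_pow_mul hF hy0]
      noncomm_ring
    _ = (1 + a * b) ^ n * F a - F y := by
      rw [← hy_comm.mul_pow, hya, inv_pow, mul_inv_cancel₀ (pow_ne_zero n hy0), one_mul]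

theorem add_pow_add_sub_pow_sub_mul_map_eq_zero (hF : ∀ x : D, x ≠ 0 → F x = -(x ^ n * F x⁻¹))
    (hneg : (-1 : D) ^ n = 1) (hab : Commute a b) (ha : a ≠ 0) (hb : b ≠ 0) (hs : 1 + a * b ≠ 0)
    (ht : 1 - a * b ≠ 0) :
    ((1 + a * b) ^ n + (1 - a * b) ^ n - 2 * (a * b) ^ n - 2) * F a = 0 := by
  have h₁ := pow_mul_map_add_inv hF hab ha hb hs
  have h₂ := pow_mul_map_add_inv hF hab.neg_left (neg_ne_zero.2 ha) hb
    (by rwa [neg_mul, ← sub_eq_add_neg])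
  rw [neg_mul, neg_pow, hneg, one_mul, ← sub_eq_add_neg, neg_mul_neg] at h₂
  simp only [map_add, map_neg] at h₁ h₂
  linear_combination (norm := noncomm_ring) h₂ - h₁

end FunctionalEquation

theorem lem4ii_general (D : Type*) [DivisionRing D]
    (p : ℕ) [CharP D p]
    (n : ℕ) (hn : 2 < n) (hdvd : (p - 1) ∣ (n - 2))
    (f : D → D)
    (hf : ∀ x y : D, f (x + y) = f x + f y)
    (hff : ∀ x : D, x ≠ 0 → f x = -(x ^ n * f x⁻¹)) :
    ∀ a b : D, a * b = b * a →
      ((1 + a * b) ^ n + (1 - a * b) ^ n - 2 * (a * b) ^ n - 2) * f a = 0 := by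
  intro a b hab
  -- for `p = 0` the truncated `p - 1` is `0`, and `0 ∣ n - 2` would force `n = 2`
  have : NeZero p := ⟨by rintro rfl; simp at hdvd; omega⟩
  have := CharP.char_is_prime_of_pos D p
  have hpow := intCast_pow_eq_sq_of_sub_one_dvd (R := D) hn.le hdvd
  have htwo : (2 : D) ^ n = 4 := by simpa using (hpow 2).trans (by norm_num)
  have hneg : (-1 : D) ^ n = 1 := by simpa using hpow (-1)
  by_cases hc : a * b = 0 ∨ a * b = 1 ∨ a * b = -1
  · rcases hc with hc | hc | hc <;> rw [hc] <;> norm_num [zero_pow (by omega : n ≠ 0), htwo, hneg]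
  · simp only [not_or] at hc
    obtain ⟨hc0, hc1, hc2⟩ := hc
    exact add_pow_add_sub_pow_sub_mul_map_eq_zero (F := AddMonoidHom.mk' f hf) hff hneg hab
      (left_ne_zero_of_mul hc0) (right_ne_zero_of_mul hc0)
      (by rwa [add_comm, ← sub_neg_eq_add, sub_ne_zero]) (sub_ne_zero.2 (Ne.symm hc1))

/-- Let `D` be a noncommutative division ring with `char D = p > 2` and `n > 2` with
`p − 1 ∣ n − 2`. If the additive map `f : D → D` satisfies `f(x) = −xⁿ f(x⁻¹)` for all
`x ∈ D^×`, then `((1+ab)ⁿ + (1−ab)ⁿ − 2(ab)ⁿ − 2)·f(a) = 0` for all commuting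
`a, b ∈ D`. -/
theorem lem4ii (D : Type*) [DivisionRing D]
    (hnc : ∃ a b : D, a * b ≠ b * a)
    (p : ℕ) (hp : p.Prime) (hp2 : 2 < p) [CharP D p]
    (n : ℕ) (hn : 2 < n) (hdvd : (p - 1) ∣ (n - 2))
    (f : D → D)
    (hf : ∀ x y : D, f (x + y) = f x + f y)
    (hff : ∀ x : D, x ≠ 0 → f x = -(x ^ n * f x⁻¹)) :
    ∀ a b : D, a * b = b * a →
      ((1 + a * b) ^ n + (1 - a * b) ^ n - 2 * (a * b) ^ n - 2) * f a = 0 :=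
  lem4ii_general D p n hn hdvd f hf hff
end

section
/- Let D be a noncommutative division ring with char D = p > 2, and suppose n = p^(ℓ+m) + p^ℓ for some integers ℓ ≥ 0 and m > 0. Let f : D → D be an additive map satisfying f(x) = −xⁿ·f(x⁻¹) for all nonzero x ∈ D. Then either f = 0, or p^m is a positive power of the cardinality of Z(D), i.e., Z(D) is a finite field and there exists an integer r ≥ 1 with |Z(D)|^r = p^m. -/
/-!
Write `P = p ^ (ℓ + m)` and `Q = p ^ ℓ`; both power maps are additive on commuting pairs.
Comparing the identity at `x`, `x + k` and `x (x + k)` for `k = 1, 2` gives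
`f (x * x) = (x ^ P + x ^ Q) * f x`.

If `z ^ P = z ^ Q` for every central `z`, the center is fixed by `z ↦ z ^ p ^ m`, so it is a
subfield of `𝔽_{p ^ m}`. Otherwise polarizing at a central `μ` with `μ ^ P ≠ μ ^ Q` gives
`f x = (x ^ P - x ^ Q) * c`. If `c ≠ 0`, then `x ↦ x ^ P - x ^ Q` is additive; scaling by `μ` makes
`x ↦ x ^ P` and `x ↦ x ^ Q`, hence `x ↦ x ^ p ^ m`, additive on all of `D`. By Hua's theorem an
additive map commuting with inversion is a homomorphism or an antihomomorphism, and in a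
noncommutative division ring both cases force `μ ^ p ^ m = μ`, i.e. `μ ^ P = μ ^ Q`.
-/

theorem AddSubgroup.eq_top_or_eq_top_of_forall_mem_or {G : Type*} [AddGroup G]
    {K L : AddSubgroup G} (hKL : ∀ x, x ∈ K ∨ x ∈ L) : K = ⊤ ∨ L = ⊤ := by
  simpa [top_le_iff] using AddSubgroupClass.subset_union (H := (⊤ : AddSubgroup G)).mp
    fun x _ ↦ hKL x

theorem AddMonoidHom.eq_or_eq_of_forall_eq_or {G M : Type*} [AddGroup G] [AddGroup M]
    {f g h : G →+ M} (hfgh : ∀ x, f x = g x ∨ f x = h x) : f = g ∨ f = h := by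
  rcases AddSubgroup.eq_top_or_eq_top_of_forall_mem_or (K := f.eqLocus g) (L := f.eqLocus h)
    hfgh with hg | hh
  · exact .inl (ext fun x ↦ (hg ▸ AddSubgroup.mem_top x : x ∈ f.eqLocus g))
  · exact .inr (ext fun x ↦ (hh ▸ AddSubgroup.mem_top x : x ∈ f.eqLocus h))

section Hua

variable {D E : Type*} [DivisionRing D] [DivisionRing E]

theorem hua_identity {a b : D} (ha : a ≠ 0) (hb : b ≠ 0) (hab : b⁻¹ - a ≠ 0) :
    a - a * b * a = (a⁻¹ + (b⁻¹ - a)⁻¹)⁻¹ := by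
  refine eq_inv_of_mul_eq_one_left ?_
  have hfactor : a - a * b * a = a * b * (b⁻¹ - a) := by
    rw [mul_sub, mul_inv_cancel_right₀ hb]
  rw [mul_add, hfactor, mul_inv_cancel_right₀ hab, ← hfactor, sub_mul, mul_inv_cancel₀ ha,
    mul_inv_cancel_right₀ ha, sub_add_cancel]

namespace AddMonoidHom

variable (φ : D →+ E)

theorem injective_of_map_inv (h1 : φ 1 = 1) (hinv : ∀ x, φ x⁻¹ = (φ x)⁻¹) :
    Function.Injective φ := by
  refine (injective_iff_map_eq_zero φ).mpr fun a ha ↦ by_contra fun ha0 ↦ ?_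
  have ha1 : a⁻¹ - 1 ≠ 0 := by
    intro h
    rw [sub_eq_zero, inv_eq_one] at h
    simp [h, h1] at ha
  -- Hua's identity at `(1, a)` is mapped to `1 = (1 + (0 - 1)⁻¹)⁻¹ = 0`.
  have key := congrArg φ (hua_identity one_ne_zero ha0 ha1)
  simp only [map_sub, map_add, hinv, h1, ha, inv_one, one_mul, mul_one, inv_zero] at key
  norm_num at key

theorem map_mul_mul_self_of_map_inv (h1 : φ 1 = 1) (hinv : ∀ x, φ x⁻¹ = (φ x)⁻¹) (a b : D) :
    φ (a * b * a) = φ a * φ b * φ a := by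
  have hinj := φ.injective_of_map_inv h1 hinv
  have hne : ∀ {x}, x ≠ 0 → φ x ≠ 0 := fun hx ↦ (map_ne_zero_iff φ hinj).mpr hx
  rcases eq_or_ne a 0 with rfl | ha
  · simp
  rcases eq_or_ne b 0 with rfl | hb
  · simp
  rcases eq_or_ne (b⁻¹ - a) 0 with hab | hab
  · obtain rfl := (sub_eq_zero.mp hab).symm
    rw [hinv, inv_mul_cancel₀ hb, inv_mul_cancel₀ (hne hb), one_mul, one_mul, hinv]
  have hφab : (φ b)⁻¹ - φ a ≠ 0 := by simpa [hinv] using hne hab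
  have key := congrArg φ (hua_identity ha hb hab)
  rw [map_sub, hinv, map_add, hinv, hinv, map_sub, hinv, ← hua_identity (hne ha) (hne hb) hφab,
    sub_right_inj] at key
  exact key

theorem map_mul_mul_add_mul_mul_of_map_inv (h1 : φ 1 = 1) (hinv : ∀ x, φ x⁻¹ = (φ x)⁻¹)
    (a x c : D) : φ (a * x * c + c * x * a) = φ a * φ x * φ c + φ c * φ x * φ a := by
  have hJ := φ.map_mul_mul_self_of_map_inv h1 hinv
  have h := hJ (a + c) x
  have hD : (a + c) * x * (a + c) = a * x * a + (a * x * c + c * x * a) + c * x * c := by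
    noncomm_ring
  have hE : (φ a + φ c) * φ x * (φ a + φ c)
      = φ a * φ x * φ a + (φ a * φ x * φ c + φ c * φ x * φ a) + φ c * φ x * φ c := by
    noncomm_ring
  rw [hD, map_add φ _ (c * x * c), map_add φ (a * x * a), hJ, hJ, map_add φ a c, hE] at h
  exact add_left_cancel (add_right_cancel h)

theorem map_mul_sub_mul_map_mul_sub_of_map_inv (h1 : φ 1 = 1) (hinv : ∀ x, φ x⁻¹ = (φ x)⁻¹)
    (a b : D) : (φ (a * b) - φ a * φ b) * (φ (a * b) - φ b * φ a) = 0 := by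
  have hJ := φ.map_mul_mul_self_of_map_inv h1 hinv
  have hsq : ∀ x, φ (x * x) = φ x * φ x := fun x ↦ by simpa [h1] using hJ x 1
  have hlin := φ.map_mul_mul_add_mul_mul_of_map_inv h1 hinv (a * b) b a
  have hD : a * b * (a * b) + a * (b * b) * a = a * b * b * a + a * b * (a * b) := by
    noncomm_ring
  calc (φ (a * b) - φ a * φ b) * (φ (a * b) - φ b * φ a)
      = (φ (a * b) * φ (a * b) + φ a * (φ b * φ b) * φ a)
        - (φ (a * b) * φ b * φ a + φ a * φ b * φ (a * b)) := by noncomm_ring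
    _ = 0 := by rw [← hsq, ← hsq, ← hJ, ← map_add, hD, hlin, sub_self]

/-- **Hua's theorem**. -/
theorem map_mul_or_map_mul_rev_of_map_inv (h1 : φ 1 = 1) (hinv : ∀ x, φ x⁻¹ = (φ x)⁻¹) :
    (∀ a b, φ (a * b) = φ a * φ b) ∨ (∀ a b, φ (a * b) = φ b * φ a) := by
  have hpt (a b : D) : φ (a * b) = φ a * φ b ∨ φ (a * b) = φ b * φ a :=
    (mul_eq_zero.mp (φ.map_mul_sub_mul_map_mul_sub_of_map_inv h1 hinv a b)).imp
      sub_eq_zero.mp sub_eq_zero.mp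
  have hrows := eq_or_eq_of_forall_eq_or (f := (compHom φ).comp AddMonoidHom.mul)
    (g := φ.compHom'.comp (AddMonoidHom.mul.comp φ))
    (h := φ.compHom'.comp (AddMonoidHom.mul.flip.comp φ))
    fun a ↦ eq_or_eq_of_forall_eq_or (hpt a)
  exact hrows.imp (fun h a b ↦ by simpa using congr($h a b))
    (fun h a b ↦ by simpa using congr($h a b))

end AddMonoidHom

end Hua

section AdditivePowerMap

variable {D : Type*} [DivisionRing D] {t : ℕ}

def powAddMonoidHom (t : ℕ) (hadd : ∀ x y : D, (x + y) ^ t = x ^ t + y ^ t) : D →+ D :=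
  AddMonoidHom.mk' (· ^ t) hadd

@[simp]
theorem powAddMonoidHom_apply (hadd : ∀ x y : D, (x + y) ^ t = x ^ t + y ^ t) (x : D) :
    powAddMonoidHom t hadd x = x ^ t :=
  rfl

theorem pow_left_injective_of_add_pow (hadd : ∀ x y : D, (x + y) ^ t = x ^ t + y ^ t) :
    Function.Injective fun x : D ↦ x ^ t :=
  (powAddMonoidHom t hadd).injective_of_map_inv (one_pow t) (inv_pow · t)

theorem sub_pow_of_add_pow (hadd : ∀ x y : D, (x + y) ^ t = x ^ t + y ^ t) (x y : D) :
    (x - y) ^ t = x ^ t - y ^ t :=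
  map_sub (powAddMonoidHom t hadd) x y

theorem mul_pow_or_mul_pow_rev_of_add_pow (hadd : ∀ x y : D, (x + y) ^ t = x ^ t + y ^ t) :
    (∀ a b : D, (a * b) ^ t = a ^ t * b ^ t) ∨ (∀ a b : D, (a * b) ^ t = b ^ t * a ^ t) :=
  (powAddMonoidHom t hadd).map_mul_or_map_mul_rev_of_map_inv (one_pow t) (inv_pow · t)

theorem neg_one_pow_of_add_pow (hadd : ∀ x y : D, (x + y) ^ t = x ^ t + y ^ t) :
    (-1 : D) ^ t = -1 := by
  simpa using map_neg (powAddMonoidHom t hadd) 1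

theorem zero_pow_of_add_pow (hadd : ∀ x y : D, (x + y) ^ t = x ^ t + y ^ t) :
    (0 : D) ^ t = 0 :=
  map_zero (powAddMonoidHom t hadd)

theorem commute_or_pow_eq_self_of_mul_pow (hadd : ∀ x y : D, (x + y) ^ t = x ^ t + y ^ t)
    (hmul : ∀ a b : D, (a * b) ^ t = a ^ t * b ^ t) (x : D) :
    (∀ y : D, Commute x (y ^ t)) ∨ x ^ t = x := by
  have hcomm : ∀ a : D, a ≠ 0 → ∀ y : D, Commute (a ^ t * a⁻¹) (y ^ t) := by
    intro a ha y
    have hconj : a⁻¹ * y ^ t * a = (a ^ t)⁻¹ * y ^ t * a ^ t := by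
      rw [← GroupWithZero.conj_pow₀ ha, hmul, hmul, inv_pow]
    calc a ^ t * a⁻¹ * y ^ t = a ^ t * (a⁻¹ * y ^ t * a) * a⁻¹ := by simp [mul_assoc, ha]
      _ = a ^ t * ((a ^ t)⁻¹ * y ^ t * a ^ t) * a⁻¹ := by rw [hconj]
      _ = y ^ t * (a ^ t * a⁻¹) := by simp [mul_assoc, pow_ne_zero t ha]
  rcases eq_or_ne x 0 with rfl | hx0
  · exact .inr (zero_pow_of_add_pow hadd)
  rcases eq_or_ne (x + 1) 0 with hx1 | hx1
  · rw [eq_neg_of_add_eq_zero_left hx1]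
    exact .inr (neg_one_pow_of_add_pow hadd)
  -- `c₁`, `c₂` centralize all `t`-th powers; if `c₁ ≠ c₂`, `x` is solved from them, so it does too.
  set c₁ := x ^ t * x⁻¹
  set c₂ := (x + 1) ^ t * (x + 1)⁻¹
  have hc₁ : c₁ * x = x ^ t := inv_mul_cancel_right₀ hx0 _
  have hc₂ : c₂ * (x + 1) = x ^ t + 1 := by
    rw [inv_mul_cancel_right₀ hx1, hadd, one_pow]
  rcases eq_or_ne c₂ c₁ with hc | hc
  · right
    have hc₁_one : c₁ = 1 := by
      rw [hc, mul_add, mul_one, hc₁] at hc₂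
      exact add_left_cancel hc₂
    rw [← hc₁, hc₁_one, one_mul]
  · left
    have hx : (c₂ - c₁) * x = 1 - c₂ := by
      have hc₂x : c₂ * x = x ^ t + 1 - c₂ := by rw [← hc₂]; noncomm_ring
      rw [sub_mul, hc₁, hc₂x]
      abel
    intro y
    rw [(eq_inv_mul_iff_mul_eq₀ (sub_ne_zero.mpr hc)).mpr hx]
    exact (((hcomm _ hx1 y).sub_left (hcomm _ hx0 y)).inv_left₀).mul_left
      ((Commute.one_left _).sub_left (hcomm _ hx1 y))

theorem pow_eq_self_of_mul_pow (hnc : ∃ a b : D, a * b ≠ b * a)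
    (hadd : ∀ x y : D, (x + y) ^ t = x ^ t + y ^ t)
    (hmul : ∀ a b : D, (a * b) ^ t = a ^ t * b ^ t) (x : D) : x ^ t = x := by
  let T := powAddMonoidHom t hadd
  let C := (Subring.centralizer (Set.range T)).toAddSubgroup
  have hcover : ∀ z, z ∈ C ∨ z ∈ T.eqLocus (AddMonoidHom.id D) := fun z ↦
    (commute_or_pow_eq_self_of_mul_pow hadd hmul z).imp
      (fun h ↦ Subring.mem_centralizer_iff.mpr (by rintro _ ⟨y, rfl⟩; exact (h y).symm.eq)) id
  rcases AddSubgroup.eq_top_or_eq_top_of_forall_mem_or hcover with hC | hF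
  · obtain ⟨a, b, hab⟩ := hnc
    refine absurd (pow_left_injective_of_add_pow hadd ?_) hab
    have ha : a ^ t ∈ C := hC ▸ AddSubgroup.mem_top _
    simp only [hmul]
    exact (Subring.mem_centralizer_iff.mp ha _ ⟨b, rfl⟩).symm
  · exact (hF ▸ AddSubgroup.mem_top x : x ∈ T.eqLocus (AddMonoidHom.id D))

theorem commutator_pow_of_mul_pow_rev (hadd : ∀ x y : D, (x + y) ^ t = x ^ t + y ^ t)
    (hrev : ∀ a b : D, (a * b) ^ t = b ^ t * a ^ t) (x y : D) :
    (x * y - y * x) ^ t = x * y ^ t - y ^ t * x := by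
  have hcomm : ∀ a y : D, Commute (a * a ^ t) (y ^ t) := by
    intro a y
    rcases eq_or_ne a 0 with rfl | ha
    · simp
    have hconj : a⁻¹ * y ^ t * a = a ^ t * y ^ t * (a ^ t)⁻¹ := by
      rw [← GroupWithZero.conj_pow₀ ha, hrev, hrev, inv_pow, mul_assoc]
    calc a * a ^ t * y ^ t = a * (a ^ t * y ^ t * (a ^ t)⁻¹) * a ^ t := by
          rw [mul_assoc a (a ^ t * y ^ t * _), inv_mul_cancel_right₀ (pow_ne_zero t ha),
            mul_assoc]
      _ = a * (a⁻¹ * y ^ t * a) * a ^ t := by rw [hconj]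
      _ = y ^ t * (a * a ^ t) := by rw [mul_assoc a⁻¹, mul_inv_cancel_left₀ ha, mul_assoc]
  have hsum : (x ^ t + x) * y ^ t = y ^ t * (x ^ t + x) := by
    have h : x ^ t + x = (x + 1) * (x + 1) ^ t - x * x ^ t - 1 := by
      rw [hadd, one_pow]; noncomm_ring
    rw [h]
    exact (((hcomm _ y).sub_left (hcomm x y)).sub_left (Commute.one_left _)).eq
  rw [add_mul, mul_add] at hsum
  rw [sub_pow_of_add_pow hadd, hrev, hrev, sub_eq_sub_iff_add_eq_add, ← hsum, add_comm]

theorem pow_eq_self_of_mul_pow_rev (hnc : ∃ a b : D, a * b ≠ b * a)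
    (hadd : ∀ x y : D, (x + y) ^ t = x ^ t + y ^ t)
    (hrev : ∀ a b : D, (a * b) ^ t = b ^ t * a ^ t) {μ : D} (hμ : μ ∈ Subring.center D) :
    μ ^ t = μ := by
  obtain ⟨a, b, hab⟩ := hnc
  have hkey : ∀ y : D, (a * y - y * a) ^ t * y = y ^ t * (a * y - y * a) ^ t := by
    intro y
    have h := commutator_pow_of_mul_pow_rev hadd hrev (a * y) y
    rw [show a * y * y - y * (a * y) = (a * y - y * a) * y by noncomm_ring, hrev] at h
    have hy : y * y ^ t = y ^ t * y := (Commute.self_pow y t).eq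
    rw [h, commutator_pow_of_mul_pow_rev hadd hrev a y]
    simp only [sub_mul, mul_assoc, hy]
  -- Comparing `hkey` at `b` and at `b + μ`, which have the same commutator with `a`, isolates `μ`.
  have hμa : a * (b + μ) - (b + μ) * a = a * b - b * a := by
    rw [mul_add, add_mul, Subring.mem_center_iff.mp hμ a]
    abel
  have h := hkey (b + μ)
  rw [hμa, hadd, mul_add, add_mul, hkey b, Subring.mem_center_iff.mp hμ] at h
  exact (mul_right_cancel₀ (pow_ne_zero t (sub_ne_zero.mpr hab)) (add_left_cancel h)).symm

theorem pow_eq_self_of_mem_center_of_add_pow (hnc : ∃ a b : D, a * b ≠ b * a)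
    (hadd : ∀ x y : D, (x + y) ^ t = x ^ t + y ^ t) {μ : D} (hμ : μ ∈ Subring.center D) :
    μ ^ t = μ :=
  (mul_pow_or_mul_pow_rev_of_add_pow hadd).elim
    (fun hmul ↦ pow_eq_self_of_mul_pow hnc hadd hmul μ)
    (fun hrev ↦ pow_eq_self_of_mul_pow_rev hnc hadd hrev hμ)

end AdditivePowerMap

section FunctionalIdentity

variable {D : Type*} [DivisionRing D] {P Q : ℕ}

theorem natCast_pow_of_add_pow_of_commute
    (hP : ∀ y z : D, Commute y z → (y + z) ^ P = y ^ P + z ^ P) (k : ℕ) : (k : D) ^ P = k := by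
  induction k with
  | zero => simpa using hP 0 0 (Commute.zero_left 0)
  | succ k ih => rw [Nat.cast_succ, hP _ _ (Nat.cast_commute k 1), ih, one_pow]

namespace AddMonoidHom

variable (f : D →+ D)

theorem map_natCast_eq_zero {n : ℕ} (h2 : (2 : D) ≠ 0)
    (hff : ∀ x : D, x ≠ 0 → f x = -(x ^ n * f x⁻¹)) (k : ℕ) : f k = 0 := by
  have h1 : (2 : D) * f 1 = 0 := by
    have h := hff 1 one_ne_zero
    rw [inv_one, one_pow, one_mul, eq_neg_iff_add_eq_zero, ← two_mul] at h
    exact h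
  rw [← nsmul_one, map_nsmul, (mul_eq_zero.mp h1).resolve_left h2, smul_zero]

theorem map_mul_self_of_add_natCast_ne_zero
    (hP : ∀ y z : D, Commute y z → (y + z) ^ P = y ^ P + z ^ P)
    (hQ : ∀ y z : D, Commute y z → (y + z) ^ Q = y ^ Q + z ^ Q)
    (hff : ∀ x : D, x ≠ 0 → f x = -(x ^ (P + Q) * f x⁻¹)) (hfk : ∀ k : ℕ, f k = 0)
    {x : D} {k : ℕ} (hx : x ≠ 0) (hk : (k : D) ≠ 0) (hxk : x + k ≠ 0) :
    f (x * x) = (x ^ P + x ^ Q) * f x := by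
  -- Apply the identity to `x`, `v` and `x * v`, which are linked by `x⁻¹ - v⁻¹ = k (x v)⁻¹`.
  set n := P + Q
  set v := x + k
  have hkc : ∀ y : D, Commute (k : D) y := Nat.cast_commute k
  have hxv : Commute x v := (Commute.refl x).add_right (hkc x).symm
  have hmul_k : ∀ y : D, f (k * y) = k * f y := fun y ↦ by
    rw [← nsmul_eq_mul, map_nsmul, nsmul_eq_mul]
  have hfv : f v = f x := by rw [map_add, hfk, add_zero]
  have hfxv : f (x * v) = f (x * x) + k * f x := by
    rw [mul_add, map_add, ← (hkc x).eq, hmul_k]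
  have hinv : x⁻¹ - v⁻¹ = k * (x * v)⁻¹ := by
    rw [inv_sub_inv' hx hxk, add_sub_cancel_left, mul_assoc, ← mul_assoc, ← (hkc x⁻¹).eq,
      mul_assoc, ← mul_inv_rev, hxv.eq]
  have hpow : (x * v) ^ n = x ^ n * v ^ n := hxv.mul_pow n
  have hvpow : v ^ n = x ^ n + (k * (x ^ P + x ^ Q) + k * k) := by
    rw [pow_add, pow_add, hP x k (hkc x).symm, hQ x k (hkc x).symm,
      natCast_pow_of_add_pow_of_commute hP, natCast_pow_of_add_pow_of_commute hQ, add_mul,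
      mul_add, mul_add, ← (hkc (x ^ P)).eq, mul_add]
    abel
  have key : (x ^ n - v ^ n) * f x = -(k * f (x * v)) := by
    have e1 : x ^ n * f v = -((x * v) ^ n * f v⁻¹) := by
      rw [hff v hxk, hpow, mul_neg, mul_assoc]
    have e2 : v ^ n * f x = -((x * v) ^ n * f x⁻¹) := by
      rw [hff x hx, hpow, (hxv.pow_pow n n).eq, mul_neg, mul_assoc]
    calc (x ^ n - v ^ n) * f x = x ^ n * f v - v ^ n * f x := by rw [hfv, sub_mul]
      _ = (x * v) ^ n * (f x⁻¹ - f v⁻¹) := by rw [e1, e2]; noncomm_ring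
      _ = k * ((x * v) ^ n * f (x * v)⁻¹) := by
        rw [← map_sub, hinv, hmul_k, ← mul_assoc, ← mul_assoc, (hkc _).eq]
      _ = -(k * f (x * v)) := by rw [hff (x * v) (mul_ne_zero hx hxk), mul_neg, neg_neg]
  rw [hvpow, hfxv] at key
  have hk2 : (k : D) * ((x ^ P + x ^ Q) * f x) + k * (k * f x)
      = k * f (x * x) + k * (k * f x) := by
    rw [← neg_inj]
    convert key using 1 <;> noncomm_ring
  exact (mul_left_cancel₀ hk (add_right_cancel hk2)).symm

theorem map_mul_self_eq_pow_add_pow_mul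
    (hP : ∀ y z : D, Commute y z → (y + z) ^ P = y ^ P + z ^ P)
    (hQ : ∀ y z : D, Commute y z → (y + z) ^ Q = y ^ Q + z ^ Q) (h2 : (2 : D) ≠ 0)
    (hff : ∀ x : D, x ≠ 0 → f x = -(x ^ (P + Q) * f x⁻¹)) (x : D) :
    f (x * x) = (x ^ P + x ^ Q) * f x := by
  have hfk := f.map_natCast_eq_zero h2 hff
  rcases eq_or_ne x 0 with rfl | hx
  · simp
  rcases eq_or_ne (x + 1) 0 with hx1 | hx1
  · refine f.map_mul_self_of_add_natCast_ne_zero hP hQ hff hfk (k := 2) hx (by exact_mod_cast h2) ?_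
    rw [Nat.cast_two, ← one_add_one_eq_two, ← add_assoc, hx1, zero_add]
    exact one_ne_zero
  · exact f.map_mul_self_of_add_natCast_ne_zero hP hQ hff hfk (k := 1) hx (by simp)
      (by simpa using hx1)

variable {f}

theorem map_mul_add_map_mul_of_mem_center (hsq : ∀ x, f (x * x) = (x ^ P + x ^ Q) * f x)
    (hP : ∀ y z : D, Commute y z → (y + z) ^ P = y ^ P + z ^ P)
    (hQ : ∀ y z : D, Commute y z → (y + z) ^ Q = y ^ Q + z ^ Q)
    {μ : D} (hμ : μ ∈ Subring.center D) (x : D) :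
    f (μ * x) + f (μ * x) = (μ ^ P + μ ^ Q) * f x + (x ^ P + x ^ Q) * f μ := by
  have hxμ : Commute x μ := Subring.mem_center_iff.mp hμ x
  have hD : (x + μ) * (x + μ) = x * x + (μ * x + μ * x) + μ * μ := by
    rw [add_mul, mul_add, mul_add, hxμ.eq]
    abel
  have h := hsq (x + μ)
  rw [hD, map_add, map_add, map_add, hsq, hsq, hP x μ hxμ, hQ x μ hxμ, map_add] at h
  have hE : (x ^ P + μ ^ P + (x ^ Q + μ ^ Q)) * (f x + f μ)
      = (x ^ P + x ^ Q) * f x + ((μ ^ P + μ ^ Q) * f x + (x ^ P + x ^ Q) * f μ)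
        + (μ ^ P + μ ^ Q) * f μ := by
    noncomm_ring
  rw [hE] at h
  exact add_left_cancel (add_right_cancel h)

theorem mul_map_eq_of_mem_center (hsq : ∀ x, f (x * x) = (x ^ P + x ^ Q) * f x)
    (hP : ∀ y z : D, Commute y z → (y + z) ^ P = y ^ P + z ^ P)
    (hQ : ∀ y z : D, Commute y z → (y + z) ^ Q = y ^ Q + z ^ Q)
    {μ : D} (hμ : μ ∈ Subring.center D) (hμPQ : μ ^ P ≠ μ ^ Q) (x : D) :
    (μ ^ P - μ ^ Q) * f x = (x ^ P - x ^ Q) * f μ := by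
  have hμx : Commute μ x := (Subring.mem_center_iff.mp hμ x).symm
  have hpolar := map_mul_add_map_mul_of_mem_center hsq hP hQ hμ
  have h1 := hpolar x
  -- `h2` expands `2 f (μ μ x)` by polarizing at `(μ, μ x)` and at `(μ μ, x)`.
  have h2 := hpolar (μ * x)
  have hswap : (x ^ P + x ^ Q) * ((μ ^ P + μ ^ Q) * f μ)
      = (μ ^ P + μ ^ Q) * ((x ^ P + x ^ Q) * f μ) := by
    rw [← mul_assoc, Subring.mem_center_iff.mp (add_mem (pow_mem hμ P) (pow_mem hμ Q)), mul_assoc]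
  rw [hμx.mul_pow, hμx.mul_pow, ← mul_assoc,
    map_mul_add_map_mul_of_mem_center hsq hP hQ (mul_mem hμ hμ) x,
    (Commute.refl μ).mul_pow, (Commute.refl μ).mul_pow, hsq, hswap] at h2
  set A := μ ^ P
  set B := μ ^ Q
  set X := x ^ P
  set Y := x ^ Q
  have key : (A - B) * ((A - B) * f x) = (A - B) * ((X - Y) * f μ) := by
    rw [← sub_eq_zero]
    calc (A - B) * ((A - B) * f x) - (A - B) * ((X - Y) * f μ)
        = (A + B) * (f (μ * x) + f (μ * x) - ((A + B) * f x + (X + Y) * f μ))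
          - 2 * ((A + B) * f (μ * x) + (A * X + B * Y) * f μ
            - ((A * A + B * B) * f x + (A + B) * ((X + Y) * f μ))) := by noncomm_ring
      _ = 0 := by rw [h1, ← h2, sub_self, sub_self, mul_zero, mul_zero, sub_zero]
  exact mul_left_cancel₀ (sub_ne_zero.mpr hμPQ) key

end AddMonoidHom

end FunctionalIdentity

section AdditivityOfPowers

variable {D : Type*} [DivisionRing D]

theorem add_pow_and_add_pow_of_add_pow_sub_pow {P Q : ℕ}
    (hsub : ∀ x y : D, (x + y) ^ P - (x + y) ^ Q = (x ^ P - x ^ Q) + (y ^ P - y ^ Q))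
    {μ : D} (hμ : μ ∈ Subring.center D) (hμPQ : μ ^ P ≠ μ ^ Q) (x y : D) :
    (x + y) ^ P = x ^ P + y ^ P ∧ (x + y) ^ Q = x ^ Q + y ^ Q := by
  have hdefect : ∀ x y : D, (x + y) ^ P - x ^ P - y ^ P = (x + y) ^ Q - x ^ Q - y ^ Q := by
    intro x y
    rw [← sub_eq_zero, ← sub_eq_zero.mpr (hsub x y)]
    abel
  -- Scaling `x, y` by `μ` multiplies the `P`-defect by `μ ^ P` and the `Q`-defect by `μ ^ Q`.
  have hscaled := hdefect (μ * x) (μ * y)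
  have hμc : ∀ z, Commute μ z := fun z ↦ (Subring.mem_center_iff.mp hμ z).symm
  rw [← mul_add, (hμc _).mul_pow, (hμc _).mul_pow, (hμc _).mul_pow, (hμc _).mul_pow,
    (hμc _).mul_pow, (hμc _).mul_pow, ← mul_sub, ← mul_sub, ← mul_sub, ← mul_sub,
    ← hdefect x y, ← sub_eq_zero, ← sub_mul] at hscaled
  have hdefect_zero := (mul_eq_zero.mp hscaled).resolve_left (sub_ne_zero.mpr hμPQ)
  constructor
  · rw [← sub_eq_zero, ← sub_sub]
    exact hdefect_zero
  · rw [← sub_eq_zero, ← sub_sub, ← hdefect x y]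
    exact hdefect_zero

theorem add_pow_of_add_pow_of_add_pow_mul {Q t : ℕ}
    (hQ : ∀ x y : D, (x + y) ^ Q = x ^ Q + y ^ Q)
    (hQt : ∀ x y : D, (x + y) ^ (Q * t) = x ^ (Q * t) + y ^ (Q * t)) (x y : D) :
    (x + y) ^ t = x ^ t + y ^ t :=
  pow_left_injective_of_add_pow hQ (show ((x + y) ^ t) ^ Q = (x ^ t + y ^ t) ^ Q by
    rw [hQ, ← pow_mul', ← pow_mul', ← pow_mul', hQt])

end AdditivityOfPowers

theorem Nat.dvd_of_pow_sub_one_dvd_pow_sub_one {a b c : ℕ} (ha : 1 < a)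
    (h : a ^ b - 1 ∣ a ^ c - 1) : b ∣ c := by
  have hgcd := Nat.pow_sub_one_gcd_pow_sub_one a b c
  rw [Nat.gcd_eq_left h] at hgcd
  have hb : b = b.gcd c := Nat.pow_right_injective ha (show a ^ b = a ^ b.gcd c by
    have := Nat.one_le_pow b a (by omega)
    have := Nat.one_le_pow (b.gcd c) a (by omega)
    omega)
  exact hb ▸ Nat.gcd_dvd_right b c

theorem finite_of_forall_pow_eq_self {K : Type*} [Field K] {q : ℕ} (hq : 1 < q)
    (h : ∀ z : K, z ^ q = z) : Finite K :=
  Set.finite_univ_iff.mp <|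
    (Polynomial.finite_setOfPred_isRoot (FiniteField.X_pow_card_sub_X_ne_zero K hq)).subset
      fun z _ ↦ by simp [h]

theorem exists_card_pow_eq_of_forall_pow_eq_self {K : Type*} [Field K] (p : ℕ) [Fact p.Prime]
    [CharP K p] {m : ℕ} (hm : 0 < m) (h : ∀ z : K, z ^ p ^ m = z) :
    Finite K ∧ ∃ r, 1 ≤ r ∧ Nat.card K ^ r = p ^ m := by
  have hp := (Fact.out : p.Prime).one_lt
  have hpm : 1 < p ^ m := Nat.one_lt_pow hm.ne' hp
  have := finite_of_forall_pow_eq_self hpm h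
  have := Fintype.ofFinite K
  obtain ⟨s, -, hcard⟩ := FiniteField.card K p
  have hunit : ∀ x : Kˣ, x ^ (p ^ m - 1) = 1 := fun x ↦ by
    have hx : x ^ (p ^ m - 1) * x = x := by
      rw [← pow_succ, Nat.sub_add_cancel hpm.le]
      exact Units.ext (by rw [Units.val_pow_eq_pow_val, h])
    exact mul_eq_right.mp hx
  obtain ⟨r, hr⟩ := Nat.dvd_of_pow_sub_one_dvd_pow_sub_one hp
    (hcard ▸ (FiniteField.forall_pow_eq_one_iff K _).mp hunit)
  refine ⟨inferInstance, r, Nat.pos_of_ne_zero ?_, ?_⟩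
  · rintro rfl
    omega
  · rw [Nat.card_eq_fintype_card, hcard, ← pow_mul, hr]

theorem finite_center_and_exists_card_pow_eq {D : Type*} [DivisionRing D] (p : ℕ) [Fact p.Prime]
    [CharP D p] {ℓ m : ℕ} (hm : 0 < m)
    (hcenter : ∀ z ∈ Subring.center D, z ^ p ^ (ℓ + m) = z ^ p ^ ℓ) :
    Finite (Subring.center D) ∧ ∃ r, 1 ≤ r ∧ Nat.card (Subring.center D) ^ r = p ^ m := by
  refine exists_card_pow_eq_of_forall_pow_eq_self p hm fun z ↦ Subtype.ext ?_
  have hz : ((z : D) ^ p ^ m - z) ^ p ^ ℓ = 0 := by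
    rw [sub_pow_char_pow_of_commute p ℓ ((Commute.refl _).pow_left _), ← pow_mul, ← pow_add,
      add_comm, hcenter z z.2, sub_self]
  simpa [sub_eq_zero] using (pow_eq_zero_iff (pow_ne_zero ℓ (Fact.out : p.Prime).ne_zero)).mp hz

/-- Let `D` be a noncommutative division ring with `char D = p > 2` and
`n = p^(ℓ+m) + p^ℓ` with `ℓ ≥ 0`, `m > 0`. Let `f : D → D` be an additive map satisfying
`f(x) = −xⁿ f(x⁻¹)` for all `x ∈ D^×`. Then either `f = 0`, or `Z(D)` is a finite field
and `p^m` is a positive power of `|Z(D)|`. -/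
theorem lem7 (D : Type*) [DivisionRing D]
    (hnc : ∃ a b : D, a * b ≠ b * a)
    (p : ℕ) (hp : p.Prime) (hp2 : 2 < p) [CharP D p]
    (n ℓ m : ℕ) (hm : 0 < m) (hnlm : n = p ^ (ℓ + m) + p ^ ℓ)
    (f : D → D)
    (hf : ∀ x y : D, f (x + y) = f x + f y)
    (hff : ∀ x : D, x ≠ 0 → f x = -(x ^ n * f x⁻¹)) :
    f = 0 ∨
      (Finite (Subring.center D) ∧
        ∃ r : ℕ, 1 ≤ r ∧ (Nat.card (Subring.center D)) ^ r = p ^ m) := by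
  have := Fact.mk hp
  subst hnlm
  have hP (y z : D) (h : Commute y z) := add_pow_char_pow_of_commute p (ℓ + m) h
  have hQ (y z : D) (h : Commute y z) := add_pow_char_pow_of_commute p ℓ h
  have h2 : (2 : D) ≠ 0 := Ring.two_ne_zero (by rw [ringChar.eq D p]; omega)
  let F := AddMonoidHom.mk' f hf
  have hsq := F.map_mul_self_eq_pow_add_pow_mul hP hQ h2 hff
  by_cases hcenter : ∃ μ ∈ Subring.center D, μ ^ p ^ (ℓ + m) ≠ μ ^ p ^ ℓ
  swap
  · exact .inr (finite_center_and_exists_card_pow_eq p hm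
      fun z hz ↦ not_not.mp fun h ↦ hcenter ⟨z, hz, h⟩)
  obtain ⟨μ, hμ, hμPQ⟩ := hcenter
  have hlin : ∀ x, (μ ^ p ^ (ℓ + m) - μ ^ p ^ ℓ) * f x = (x ^ p ^ (ℓ + m) - x ^ p ^ ℓ) * f μ :=
    F.mul_map_eq_of_mem_center hsq hP hQ hμ hμPQ
  by_cases hfμ : f μ = 0
  · left
    funext x
    simpa [hfμ, sub_ne_zero.mpr hμPQ] using hlin x
  have hsub : ∀ x y : D, (x + y) ^ p ^ (ℓ + m) - (x + y) ^ p ^ ℓ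
      = (x ^ p ^ (ℓ + m) - x ^ p ^ ℓ) + (y ^ p ^ (ℓ + m) - y ^ p ^ ℓ) := fun x y ↦ by
    refine mul_right_cancel₀ hfμ ?_
    rw [add_mul, ← hlin, ← hlin, ← hlin, ← mul_add, hf]
  have hadd := add_pow_and_add_pow_of_add_pow_sub_pow hsub hμ hμPQ
  have htadd := add_pow_of_add_pow_of_add_pow_mul (fun x y ↦ (hadd x y).2)
    (fun x y ↦ pow_add p ℓ m ▸ (hadd x y).1)
  refine absurd ?_ hμPQ
  rw [pow_add, pow_mul', pow_eq_self_of_mem_center_of_add_pow hnc htadd hμ]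
end

section
/- Let F be a field and R a unital F-algebra that is additively generated by units, i.e., every element of R is a finite sum of units of R. Let n ≠ 2 be an integer, and suppose f, g : R → R are additive maps satisfying f(x) = xⁿ·g(x⁻¹) for all units x ∈ R^× (where xⁿ is computed in the group of units when n is negative). If it is not the case that F has characteristic p > 0 with (p−1) dividing (n−2), then f = 0 and g = 0. -/
/-!
Choose `k : ℕ` whose image `c` in `F` is a unit with `c ^ (n - 2) ≠ 1`: in characteristic zero
`c = 2` works, in characteristic `p` a generator of `(ZMod p)ˣ`, which has order `p - 1`.
For a unit `x`, additivity gives `f (k x) = k f x` and `k g (k⁻¹ x⁻¹) = g x⁻¹`; feeding `k x`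
into the functional equation and using that `k` is central yields `(c ^ 2 - c ^ n) f x = 0`,
so `f` vanishes on units, hence everywhere. Then `x⁻ⁿ g x = f x⁻¹ = 0` gives `g = 0`.
-/

lemma exists_natCast_unit_zpow_ne_one_of_charZero (F : Type*) [Field F] [CharZero F]
    {m : ℤ} (hm : m ≠ 0) : ∃ (k : ℕ) (c : Fˣ), (c : F) = k ∧ c ^ m ≠ 1 := by
  refine ⟨2, Units.mk0 2 two_ne_zero, rfl, fun hc => ?_⟩
  obtain ⟨j, hj, hpow⟩ :=
    isOfFinOrder_iff_pow_eq_one.mp (isOfFinOrder_iff_zpow_eq_one.mpr ⟨m, hm, hc⟩)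
  have : ((2 ^ j : ℕ) : F) = 1 := by simpa using congrArg Units.val hpow
  rcases Nat.pow_eq_one.mp (Nat.cast_eq_one.mp this) with h | h <;> omega

lemma exists_natCast_unit_zpow_ne_one_of_charP (F : Type*) [Field F] (p : ℕ) [CharP F p]
    [Fact p.Prime] {m : ℤ} (hm : ¬ ((p : ℤ) - 1) ∣ m) :
    ∃ (k : ℕ) (c : Fˣ), (c : F) = k ∧ c ^ m ≠ 1 := by
  obtain ⟨ζ, hζ⟩ := IsCyclic.exists_ofOrder_eq_natCard (α := (ZMod p)ˣ)
  let ψ : (ZMod p)ˣ →* Fˣ := Units.map (ZMod.castHom dvd_rfl F).toMonoidHom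
  refine ⟨(ζ : ZMod p).val, ψ ζ, ?_, fun hc => hm ?_⟩
  · simp [ψ]
  · have hord : orderOf (ψ ζ) = p - 1 := by
      rw [orderOf_injective ψ (Units.map_injective (ZMod.castHom_injective F)), hζ,
        Nat.card_eq_fintype_card, ZMod.card_units]
    rw [← Nat.cast_pred (Fact.out : p.Prime).pos, ← hord]
    exact orderOf_dvd_iff_zpow_eq_one.mpr hc

lemma exists_natCast_unit_zpow_ne_one (F : Type*) [Field F] {m : ℤ} (hm : m ≠ 0)
    (hchar : ¬ ∃ p : ℕ, 0 < p ∧ CharP F p ∧ ((p : ℤ) - 1) ∣ m) :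
    ∃ (k : ℕ) (c : Fˣ), (c : F) = k ∧ c ^ m ≠ 1 := by
  obtain ⟨p, hp⟩ := CharP.exists F
  rcases CharP.char_is_prime_or_zero F p with hprime | rfl
  · have := Fact.mk hprime
    exact exists_natCast_unit_zpow_ne_one_of_charP F p fun h => hchar ⟨p, hprime.pos, hp, h⟩
  · have := CharP.charP_to_charZero F
    exact exists_natCast_unit_zpow_ne_one_of_charZero F hm

section FunctionalEquation

variable {R : Type*} [Ring R] {n : ℤ} {f g : R →+ R}

lemma natCast_mul_natCast_mul_eq_zpow_mul
    (hfg : ∀ x : Rˣ, f x = ((x ^ n : Rˣ) : R) * g ((x⁻¹ : Rˣ) : R))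
    {k : ℕ} {w : Rˣ} (hw : (w : R) = k) (x : Rˣ) :
    (k : R) * k * f x = ((w ^ n : Rˣ) : R) * f x := by
  have hcomm : Commute w x := Units.ext <| by simpa [hw] using (Nat.cast_commute k (x : R)).eq
  have hf_mul : f (w * x : Rˣ) = k * f x := by
    rw [Units.val_mul, hw, ← nsmul_eq_mul, map_nsmul, nsmul_eq_mul]
  have hg_mul : (k : R) * g ((w⁻¹ * x⁻¹ : Rˣ) : R) = g ((x⁻¹ : Rˣ) : R) := by
    rw [← nsmul_eq_mul, ← map_nsmul, nsmul_eq_mul, ← hw, ← Units.val_mul, mul_inv_cancel_left]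
  have key := hfg (w * x)
  rw [hf_mul, hcomm.mul_zpow, mul_inv_rev, ← hcomm.inv_inv.eq] at key
  calc (k : R) * k * f x = k * (((w ^ n * x ^ n : Rˣ) : R) * g ((w⁻¹ * x⁻¹ : Rˣ) : R)) := by
        rw [mul_assoc, key]
    _ = ((w ^ n : Rˣ) : R) * (((x ^ n : Rˣ) : R) * (k * g ((w⁻¹ * x⁻¹ : Rˣ) : R))) := by
        rw [Units.val_mul, mul_assoc, (Nat.cast_commute k ((w ^ n : Rˣ) : R)).left_comm,
          (Nat.cast_commute k ((x ^ n : Rˣ) : R)).left_comm]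
    _ = ((w ^ n : Rˣ) : R) * f x := by rw [hg_mul, hfg x]

lemma eq_zero_of_forall_units_eq_zero
    (hgen : ∀ x : R, ∃ (k : ℕ) (u : Fin k → Rˣ), x = ∑ i : Fin k, (u i : R))
    {h : R →+ R} (hu : ∀ x : Rˣ, h x = 0) : h = 0 := by
  ext x
  obtain ⟨k, u, rfl⟩ := hgen x
  simp [map_sum, hu]

variable (F : Type*) [Field F] [Algebra F R]

lemma apply_unit_eq_zero_of_zpow_sub_two_ne_one
    (hfg : ∀ x : Rˣ, f x = ((x ^ n : Rˣ) : R) * g ((x⁻¹ : Rˣ) : R))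
    {k : ℕ} {c : Fˣ} (hck : (c : F) = k) (hc : c ^ (n - 2) ≠ 1) (x : Rˣ) : f x = 0 := by
  let w : Rˣ := Units.map (algebraMap F R).toMonoidHom c
  have hw : (w : R) = k := by simp [w, hck]
  have hwn : ((w ^ n : Rˣ) : R) = algebraMap F R ((c ^ n : Fˣ) : F) := by
    simp [w, ← map_zpow]
  have hscalar : (c : F) * c - ((c ^ n : Fˣ) : F) ≠ 0 := by
    rw [sub_ne_zero, ← Units.val_mul, Ne, Units.val_inj, ← sq, ← zpow_natCast]
    exact fun h => hc (by rw [zpow_sub, ← h, Nat.cast_ofNat, mul_inv_cancel])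
  have key := natCast_mul_natCast_mul_eq_zpow_mul hfg hw x
  rw [← sub_eq_zero, ← sub_mul, hwn, ← map_natCast (algebraMap F R), ← hck, ← map_mul,
    ← map_sub] at key
  exact ((isUnit_iff_ne_zero.mpr hscalar).map (algebraMap F R)).mul_right_eq_zero.mp key

end FunctionalEquation

/-- Let `F` be a field and `R` a unital `F`-algebra additively generated by units. Let
`n ≠ 2` be an integer and `f, g : R → R` additive maps with `f(x) = xⁿ g(x⁻¹)` for all
units `x` (powers computed in the group of units). If it is not the case that
`char F = p > 0` with `p − 1 ∣ n − 2`, then `f = 0` and `g = 0`. -/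
theorem thm5 (F : Type*) [Field F] (R : Type*) [Ring R] [Algebra F R]
    (hgen : ∀ x : R, ∃ (k : ℕ) (u : Fin k → Rˣ), x = ∑ i : Fin k, (u i : R))
    (n : ℤ) (hn : n ≠ 2) (f g : R → R)
    (hf : ∀ x y : R, f (x + y) = f x + f y)
    (hg : ∀ x y : R, g (x + y) = g x + g y)
    (hfg : ∀ x : Rˣ, f (x : R) = ((x ^ n : Rˣ) : R) * g ((x⁻¹ : Rˣ) : R))
    (hchar : ¬ ∃ p : ℕ, 0 < p ∧ CharP F p ∧ ((p : ℤ) - 1) ∣ (n - 2)) :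
    f = 0 ∧ g = 0 := by
  let f' := AddMonoidHom.mk' f hf
  let g' := AddMonoidHom.mk' g hg
  obtain ⟨k, c, hck, hc⟩ := exists_natCast_unit_zpow_ne_one F (sub_ne_zero.mpr hn) hchar
  have hf0 : f' = 0 :=
    eq_zero_of_forall_units_eq_zero hgen
      (apply_unit_eq_zero_of_zpow_sub_two_ne_one (f := f') (g := g') F hfg hck hc)
  have hg0 : g' = 0 := by
    refine eq_zero_of_forall_units_eq_zero hgen fun v => ?_
    have h := hfg v⁻¹
    rw [inv_inv, show f _ = 0 from DFunLike.congr_fun hf0 _] at h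
    exact (v⁻¹ ^ n).isUnit.mul_right_eq_zero.mp h.symm
  exact ⟨congrArg DFunLike.coe hf0, congrArg DFunLike.coe hg0⟩
end
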